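/- Let x_i, x_j be F-dimensional random vectors as in Assumption 1 with per-feature covariances σ_f ∈ [0,1), and let g_i, g_j be the first-order Taylor linearizations of two clients' gradient functions around the feature means with partial-derivative products a_f·b_f > 0 for all f. Then the map (σ_1,...,σ_F) ↦ (I(x_i;x_j), Cov(g_i,g_j)) = (-(1/2)Σ_f log(1-σ_f²), Σ_f σ_f a_f b_f) is such that both coordinates are strictly increasing in each σ_f; consequently, along any path where all σ_f decrease, mutual information and gradient covariance decrease together. -/

import Mathlib

/-!
Both quantities are sums over the features of a per-feature term that is strictly increasing in
`σ_f` on `[0, 1)`: `t ↦ -(1/2) log (1 - t²)` because `1 - t²` decreases and stays positive there,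
and `t ↦ t · (a_f b_f)` because `a_f b_f > 0`. Lowering every `σ_f`, one of them strictly, lowers
each term, one of them strictly, hence lowers both sums strictly.
-/

open Finset

theorem Fintype.sum_lt_sum_of_strictMonoOn {ι α M : Type*} [Fintype ι] [PartialOrder α]
    [AddCommMonoid M] [PartialOrder M] [IsOrderedCancelAddMonoid M]
    {s : Set α} {φ : ι → α → M} (hφ : ∀ i, StrictMonoOn (φ i) s) {x y : ι → α}
    (hx : ∀ i, x i ∈ s) (hy : ∀ i, y i ∈ s) (hle : ∀ i, x i ≤ y i) (hlt : ∃ i, x i < y i) :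
    ∑ i, φ i (x i) < ∑ i, φ i (y i) := by
  obtain ⟨i₀, hi₀⟩ := hlt
  refine Finset.sum_lt_sum (fun i _ => (hφ i).monotoneOn (hx i) (hy i) (hle i)) ?_
  exact ⟨i₀, mem_univ _, hφ i₀ (hx i₀) (hy i₀) hi₀⟩

theorem strictMonoOn_neg_half_mul_log_one_sub_sq :
    StrictMonoOn (fun t : ℝ => -(1 / 2) * Real.log (1 - t ^ 2)) (Set.Ico 0 1) := by
  rintro s ⟨hs₀, -⟩ t ⟨-, ht₁⟩ hst
  have hpos : 0 < 1 - t ^ 2 := by nlinarith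
  have hlog : Real.log (1 - t ^ 2) < Real.log (1 - s ^ 2) :=
    Real.log_lt_log hpos (by nlinarith)
  dsimp only
  linarith

/-- Theorem 1 (composite): with per-feature covariances `σ_f ∈ [0,1)` and
partial-derivative products `a_f b_f > 0`, both the mutual information
`-(1/2) Σ_f log (1 - σ_f²)` and the linearized gradient covariance
`Σ_f σ_f a_f b_f` are strictly increasing in each `σ_f`: along any path where all
`σ_f` decrease (strictly for some `f`), mutual information and gradient covariance
decrease together. -/
theorem MI_and_cov_decrease_together
    (F : ℕ) (a b σ σ' : Fin F → ℝ)
    (hab : ∀ f, 0 < a f * b f)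
    (hσ : ∀ f, σ f ∈ Set.Ico (0 : ℝ) 1)
    (hσ' : ∀ f, σ' f ∈ Set.Ico (0 : ℝ) 1)
    (hle : ∀ f, σ' f ≤ σ f) (hlt : ∃ f, σ' f < σ f) :
    (-(1 / 2) * ∑ f, Real.log (1 - σ' f ^ 2)
        < -(1 / 2) * ∑ f, Real.log (1 - σ f ^ 2)) ∧
    (∑ f, σ' f * a f * b f < ∑ f, σ f * a f * b f) := by
  constructor
  · simpa only [mul_sum] using Fintype.sum_lt_sum_of_strictMonoOn
      (fun _ => strictMonoOn_neg_half_mul_log_one_sub_sq) hσ' hσ hle hlt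
  · simpa only [mul_assoc] using Fintype.sum_lt_sum_of_strictMonoOn
      (fun f => (strictMono_mul_right_of_pos (hab f)).strictMonoOn (Set.Ico 0 1)) hσ' hσ hle hlt
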